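/- For the two-loops quiver over ℂ and every n ≥ 2, the quotient vector space ℂ(Q_n||Q_1)/Im D_{n−1} (which computes the n-th Hochschild cohomology group HH^n(A) of A = ℂQ/⟨Q_2⟩) has dimension 2^{n+1} − 2^{n−1}. -/

import Mathlib

/-! Two-loops quiver base: one vertex `e`, two loops `a`, `b`.

`Q_n` is the set of words of length `n` in `{a, b}` (all paths are parallel, since
there is a single vertex), and `ℂ(Q_n ∥ Q_1)` is the complex vector space with basis
`Q_n ∥ Q_1 = Q_n × Q_1`. -/

namespace TwoLoops

/-- The two arrows (loops) of the quiver. -/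
inductive TL : Type
  | a : TL
  | b : TL
deriving DecidableEq

instance : Fintype TL := ⟨{TL.a, TL.b}, fun x => by cases x <;> simp⟩

/-- Paths of length `n` in the two-loops quiver: words of length `n` in `{a, b}`. -/
abbrev Wd (n : ℕ) : Type := Fin n → TL

/-- `ℂ(Q_n ∥ Q_1)`: the complex vector space with basis `Q_n ∥ Q_1 = Q_n × Q_1`. -/
abbrev CQ1 (n : ℕ) : Type := (Wd n × TL) → ℂ

/-- `ℂ(Q_n ∥ Q_0)`: basis `Q_n ∥ Q_0 = Q_n` (the unique vertex `e` is omitted). -/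
abbrev CQ0 (n : ℕ) : Type := Wd n → ℂ

/-- The basis element `(γ, x)` of `ℂ(Q_n ∥ Q_1)`. -/
noncomputable def bE {n : ℕ} (γ : Wd n) (x : TL) : CQ1 n := Pi.single (γ, x) (1 : ℂ)

/-- The Gerstenhaber-type bracket `[·,·]_Q` on basis elements, for a degree-one
element `(c,x) ∈ Q_1 ∥ Q_1` against `(γ,y) ∈ Q_n ∥ Q_1`:
`[(c,x),(γ,y)]_Q = δ_{c,y}·(γ,x) − Σ_{i=1}^n δ_{γ_i,x}·(γ ⋄_i c, y)`,
which is the general formula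
`Σ_i (−1)^{(i−1)(m−1)} (α,x)∘_i(β,y) − (−1)^{(n−1)(m−1)} Σ_i (−1)^{(i−1)(n−1)} (β,y)∘_i(α,x)`
specialized to the case where the left argument has degree one (all signs are `+1`;
here `γ ⋄_i c` is the path obtained from `γ` by replacing its `i`-th arrow by `c`). -/
noncomputable def brB {n : ℕ} (P : Wd 1 × TL) (R : Wd n × TL) : CQ1 n :=
  (if P.1 0 = R.2 then bE R.1 P.2 else 0)
    - ∑ i : Fin n,
        (if R.1 i = P.2 then bE (Function.update R.1 i (P.1 0)) R.2 else 0)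

/-- The bracket `[f, ·]_Q` with a degree-one element `f ∈ ℂ(Q_1 ∥ Q_1)`, as a linear
endomorphism of `ℂ(Q_n ∥ Q_1)` (bilinear extension of `brB`). -/
noncomputable def brL {n : ℕ} (f : CQ1 1) : CQ1 n →ₗ[ℂ] CQ1 n :=
  ∑ P : Wd 1 × TL, ∑ R : Wd n × TL,
    f P • ((LinearMap.proj R : CQ1 n →ₗ[ℂ] ℂ).smulRight (brB P R))

/-- `H = (b,b) − (a,a)`. -/
noncomputable def H : CQ1 1 := bE (fun _ => TL.b) TL.b - bE (fun _ => TL.a) TL.a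

/-- `E = (a,b)`. -/
noncomputable def E : CQ1 1 := bE (fun _ => TL.a) TL.b

/-- `F = (b,a)`. -/
noncomputable def F : CQ1 1 := bE (fun _ => TL.b) TL.a

/-- `I = (a,a) + (b,b)`. -/
noncomputable def Iel : CQ1 1 := bE (fun _ => TL.a) TL.a + bE (fun _ => TL.b) TL.b

/-- `D_n` on basis elements: `D_n(γ,e) = (aγ,a) + (bγ,b) + (−1)^{n+1}((γa,a) + (γb,b))`. -/
noncomputable def DB (n : ℕ) (γ : Wd n) : CQ1 (n + 1) :=
  bE (Fin.cons TL.a γ) TL.a + bE (Fin.cons TL.b γ) TL.b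
    + ((-1 : ℂ) ^ (n + 1)) • (bE (Fin.snoc γ TL.a) TL.a + bE (Fin.snoc γ TL.b) TL.b)

/-- The linear map `D_n : ℂ(Q_n ∥ Q_0) → ℂ(Q_{n+1} ∥ Q_1)`. -/
noncomputable def Dmap (n : ℕ) : CQ0 n →ₗ[ℂ] CQ1 (n + 1) :=
  ∑ γ : Wd n, (LinearMap.proj γ : CQ0 n →ₗ[ℂ] ℂ).smulRight (DB n γ)

/-- `a(γ)`: the number of occurrences of the arrow `a` in the path `γ`. -/
def ca {n : ℕ} (γ : Wd n) : ℕ := (Finset.univ.filter fun i => γ i = TL.a).card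

/-- `b(γ)`: the number of occurrences of the arrow `b` in the path `γ`. -/
def cb {n : ℕ} (γ : Wd n) : ℕ := (Finset.univ.filter fun i => γ i = TL.b).card

/-- `v(γ) = a(γ) − b(γ)`. -/
def vv {n : ℕ} (γ : Wd n) : ℤ := (ca γ : ℤ) - (cb γ : ℤ)

/-! For `n ≥ 1` the map `D_n` is injective: the coordinate `(xγ, x)` of `D_n c`, with `x`
different from the last letter of `γ`, is `c γ`; rank–nullity does the rest.
(For `n = 0` the two halves of `D_0(e)` cancel and `D_0 = 0`.) -/

lemma finrank_CQ0 (n : ℕ) : Module.finrank ℂ (CQ0 n) = 2 ^ n := by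
  simp [show Fintype.card TL = 2 from rfl]

lemma finrank_CQ1 (n : ℕ) : Module.finrank ℂ (CQ1 n) = 2 ^ (n + 1) := by
  simp [show Fintype.card TL = 2 from rfl, pow_succ]

lemma Dmap_apply (n : ℕ) (c : CQ0 n) (p : Wd (n + 1) × TL) :
    Dmap n c p = ∑ γ : Wd n, c γ * DB n γ p := by
  simp [Dmap, Finset.sum_apply]

/-- The basis vector `(xγ, x)` occurs in `D(γ')` only as the term `(xγ', x)` with `γ' = γ`:
the terms `(γ'y, y)` end in `y = x`, while `xγ` ends in the last letter of `γ`. -/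
lemma DB_apply_cons_of_ne_last {n : ℕ} (γ γ' : Wd (n + 1)) {x : TL}
    (hx : x ≠ γ (Fin.last n)) :
    DB (n + 1) γ' (Fin.cons x γ, x) = if γ = γ' then 1 else 0 := by
  have hsnoc : ∀ δ : Wd (n + 1), (Fin.cons x γ : Wd (n + 2)) ≠ Fin.snoc δ x := by
    intro δ h
    have hlast := congrFun h (Fin.last (n + 1))
    rw [Fin.snoc_last, ← Fin.succ_last, Fin.cons_succ] at hlast
    exact hx hlast.symm
  simp only [DB, bE, Pi.add_apply, Pi.smul_apply, Pi.single_apply, Prod.mk.injEq,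
    smul_eq_mul]
  cases x <;> simp_all [Fin.cons_inj]

lemma Dmap_apply_cons_of_ne_last {n : ℕ} (c : CQ0 (n + 1)) (γ : Wd (n + 1)) {x : TL}
    (hx : x ≠ γ (Fin.last n)) : Dmap (n + 1) c (Fin.cons x γ, x) = c γ := by
  simp [Dmap_apply, DB_apply_cons_of_ne_last γ _ hx]

lemma Dmap_injective {n : ℕ} (hn : 1 ≤ n) : Function.Injective (Dmap n) := by
  obtain ⟨n, rfl⟩ := Nat.exists_eq_add_of_le' hn
  intro c c' h
  funext γ
  obtain ⟨x, hx⟩ : ∃ x : TL, x ≠ γ (Fin.last n) := by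
    cases γ (Fin.last n)
    exacts [⟨TL.b, nofun⟩, ⟨TL.a, nofun⟩]
  rw [← Dmap_apply_cons_of_ne_last c γ hx, h, Dmap_apply_cons_of_ne_last c' γ hx]

/-- STATEMENT 17: for every `n ≥ 2` (written `n = m+1` with `m ≥ 1`), the quotient
vector space `ℂ(Q_n ∥ Q_1)/Im D_{n−1}` — which computes the Hochschild cohomology group
`HH^n(A)` for `A = ℂQ/⟨Q_2⟩` — has dimension `2^{n+1} − 2^{n−1}`. -/
theorem stmt17 (m : ℕ) (hm : 1 ≤ m) :
    Module.finrank ℂ (CQ1 (m + 1) ⧸ LinearMap.range (Dmap m))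
      = 2 ^ (m + 2) - 2 ^ m := by
  rw [Submodule.finrank_quotient, LinearMap.finrank_range_of_inj (Dmap_injective hm),
    finrank_CQ1, finrank_CQ0]

end TwoLoops
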